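/- arXiv:1211.2788 — 2 statements merged into one kernel-verified Lean document; each statement's English description precedes it below -/
import Mathlib

section
/- For every integer d, the smallest partition μ (colored with angle color 1, i.e. box (i,j) has color (i - j + 1) mod 2) satisfying d(μ) = N_0(μ) - N_1(μ) = d has exactly 2d² + d boxes. -/
/-!
Deleting the first row of `ν`, of length `r`, flips the colors of the remaining boxes, so
`d(ν) = -(r mod 2) - d(tail ν)`. Induction on the rows then gives `|4 d(ν) + 1| ≤ 2(i + j) + 1`
for every box `(i, j)` outside `ν`: a diagram with `d(ν) = d` contains the staircase
`{(i, j) | i + j < k}` with `2k + 1 = |4d + 1|`. The same recursion shows that this staircase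
has `4 d + 1 = (-1)^k (2k + 1)`, so its value of `d` is exactly `d` (as `d ↦ |4d + 1|` is
injective), and it has `k (k + 1) / 2 = ((4d + 1)^2 - 1) / 8 = 2d² + d` boxes.
-/

/-- `d(μ) = N₀(μ) - N₁(μ)` for a Young diagram colored with angle color 1:
the box `(i, j)` has color `(i - j + 1) mod 2 = (i + j + 1) mod 2`. -/
def dcol1 (μ : YoungDiagram) : ℤ :=
  ((μ.cells.filter fun c => (c.1 + c.2 + 1) % 2 = 0).card : ℤ) -
    ((μ.cells.filter fun c => (c.1 + c.2 + 1) % 2 = 1).card : ℤ)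

open Finset

namespace YoungDiagram

noncomputable def tail (ν : YoungDiagram) : YoungDiagram where
  cells := ν.cells.preimage (Prod.map (· + 1) id)
    ((add_left_injective 1).prodMap Function.injective_id).injOn
  isLowerSet a b hab ha := by
    simp only [coe_preimage, Set.mem_preimage, mem_coe, mem_cells] at ha ⊢
    exact ν.up_left_mem (Nat.add_le_add_right hab.1 1) hab.2 ha

theorem cells_tail (ν : YoungDiagram) :
    ν.tail.cells = ν.cells.preimage (Prod.map (· + 1) id)
      ((add_left_injective 1).prodMap Function.injective_id).injOn :=
  rfl

@[simp]
theorem mem_tail {ν : YoungDiagram} {c : ℕ × ℕ} : c ∈ ν.tail ↔ (c.1 + 1, c.2) ∈ ν := by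
  rw [← mem_cells]; simp [tail, Prod.map]

theorem sum_cells_eq_sum_row_zero_add_sum_tail {M : Type*} [AddCommMonoid M]
    (ν : YoungDiagram) (g : ℕ × ℕ → M) :
    ∑ c ∈ ν.cells, g c =
      ∑ j ∈ range (ν.rowLen 0), g (0, j) + ∑ c ∈ ν.tail.cells, g (c.1 + 1, c.2) := by
  classical
  rw [← sum_filter_add_sum_filter_not ν.cells (fun c => c.1 = 0)]
  congr 1
  · rw [show ν.cells.filter (fun c => c.1 = 0) = ν.row 0 from rfl, row_eq_prod, sum_product,
      sum_singleton]
  · have hrange (c : ℕ × ℕ) : c ∈ Set.range (Prod.map (· + 1) id) ↔ ¬c.1 = 0 :=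
      ⟨fun ⟨_, hc⟩ => hc ▸ Nat.succ_ne_zero _,
        fun hc => ⟨(c.1 - 1, c.2), Prod.ext (Nat.sub_add_cancel (Nat.pos_of_ne_zero hc)) rfl⟩⟩
    rw [cells_tail, ← filter_congr fun c _ => hrange c]
    exact (sum_preimage' _ _ _ g).symm

theorem card_eq_rowLen_zero_add_card_tail (ν : YoungDiagram) :
    ν.card = ν.rowLen 0 + ν.tail.card := by
  simpa using ν.sum_cells_eq_sum_row_zero_add_sum_tail (fun _ => (1 : ℕ))

theorem card_tail_lt {ν : YoungDiagram} (h : ν ≠ ⊥) : ν.tail.card < ν.card := by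
  have h00 : (0, 0) ∈ ν := by
    contrapose! h
    ext c
    simpa using fun hc => h (ν.up_left_mem (Nat.zero_le c.1) (Nat.zero_le c.2) hc)
  rw [card_eq_rowLen_zero_add_card_tail ν]
  exact Nat.lt_add_of_pos_left (mem_iff_lt_rowLen.mp h00)

end YoungDiagram

open YoungDiagram

theorem dcol1_eq_sum (μ : YoungDiagram) :
    dcol1 μ = ∑ c ∈ μ.cells, (-1 : ℤ) ^ (c.1 + c.2 + 1) := by
  rw [dcol1, card_filter, card_filter]
  push_cast
  rw [← sum_sub_distrib]
  refine sum_congr rfl fun c _ => ?_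
  rcases Nat.even_or_odd (c.1 + c.2 + 1) with h | h
  · simp [h.neg_one_pow, Nat.even_iff.mp h]
  · simp [h.neg_one_pow, Nat.odd_iff.mp h]

theorem sum_range_neg_one_pow_succ (r : ℕ) :
    ∑ j ∈ range r, (-1 : ℤ) ^ (j + 1) = -(r % 2 : ℕ) := by
  induction r with
  | zero => simp
  | succ r ih =>
    rw [sum_range_succ, ih]
    rcases Nat.even_or_odd r with h | h <;>
      simp [pow_succ, h.neg_one_pow, Nat.even_iff.mp, Nat.odd_iff.mp, h]

theorem dcol1_eq_neg_sub_dcol1_tail (ν : YoungDiagram) :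
    dcol1 ν = -(ν.rowLen 0 % 2 : ℕ) - dcol1 ν.tail := by
  simp only [dcol1_eq_sum, sum_cells_eq_sum_row_zero_add_sum_tail ν, zero_add,
    sum_range_neg_one_pow_succ, sub_eq_add_neg, ← sum_neg_distrib]
  congr 1
  exact sum_congr rfl fun c _ => by ring

theorem natAbs_four_mul_dcol1_add_one_le {ν : YoungDiagram} {i j : ℕ} (h : (i, j) ∉ ν) :
    (4 * dcol1 ν + 1).natAbs ≤ 2 * (i + j) + 1 := by
  induction hn : ν.card using Nat.strong_induction_on generalizing ν i j with
  | _ n ih =>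
  rcases eq_or_ne ν ⊥ with rfl | hν
  · simp [dcol1]
  have ih' {i' j' : ℕ} (h' : (i', j') ∉ ν.tail) := ih _ (hn ▸ card_tail_lt hν) h' rfl
  have hrec := dcol1_eq_neg_sub_dcol1_tail ν
  rcases i with _ | i
  · have hr : ν.rowLen 0 ≤ j := by
      rw [mem_iff_lt_rowLen] at h; omega
    have := ih' (i' := 0) (j' := ν.rowLen 0) (by
      rw [mem_tail, mem_iff_lt_rowLen]; exact (ν.rowLen_anti 0 1 zero_le_one).not_gt)
    -- an odd first row is absorbed because `4 * dcol1 ν.tail + 1 ≡ 1 [ZMOD 4]`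
    omega
  · have := ih' (i' := i) (j' := j) (by rwa [mem_tail])
    omega

def staircase (k : ℕ) : YoungDiagram where
  cells := (range k ×ˢ range k).filter fun c => c.1 + c.2 < k
  isLowerSet a b hab ha := by
    simp only [coe_filter, Set.mem_ofPred_eq, mem_product, mem_range] at ha ⊢
    have := hab.1; have := hab.2
    omega

@[simp]
theorem mem_staircase {k : ℕ} {c : ℕ × ℕ} : c ∈ staircase k ↔ c.1 + c.2 < k := by
  simp only [staircase, ← mem_cells, mem_filter, mem_product, mem_range]
  omega

theorem staircase_le {k : ℕ} {ν : YoungDiagram} (h : ∀ i j, (i, j) ∉ ν → k ≤ i + j) :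
    staircase k ≤ ν := fun c hc =>
  by_contra fun hν => (h c.1 c.2 hν).not_gt (mem_staircase.mp hc)

theorem rowLen_zero_staircase (k : ℕ) : (staircase k).rowLen 0 = k := by
  refine eq_of_forall_lt_iff fun j => ?_
  rw [← mem_iff_lt_rowLen, mem_staircase, zero_add]

theorem tail_staircase (k : ℕ) : (staircase (k + 1)).tail = staircase k := by
  ext c
  simp only [mem_cells, mem_tail, mem_staircase]
  omega

theorem four_mul_dcol1_staircase_add_one (k : ℕ) :
    4 * dcol1 (staircase k) + 1 = (-1) ^ k * (2 * k + 1) := by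
  induction k with
  | zero => simp [dcol1, staircase]
  | succ k ih =>
    rw [dcol1_eq_neg_sub_dcol1_tail, tail_staircase, rowLen_zero_staircase, pow_succ]
    rcases Nat.even_or_odd k with h | h
    · rw [h.neg_one_pow] at ih ⊢
      have := Nat.even_iff.mp h
      push_cast
      omega
    · rw [h.neg_one_pow] at ih ⊢
      have := Nat.odd_iff.mp h
      push_cast
      omega

theorem two_mul_card_staircase (k : ℕ) : 2 * (staircase k).card = k * (k + 1) := by
  induction k with
  | zero => simp [staircase, card]
  | succ k ih =>
    rw [card_eq_rowLen_zero_add_card_tail, rowLen_zero_staircase, tail_staircase, mul_add, ih]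
    ring

/-- For every integer `d` the smallest partition `μ` (under inclusion of Young diagrams)
with `d(μ) = d` (angle color `1`) exists and has exactly `2d² + d` boxes. -/
theorem smallest_partition_color1 (d : ℤ) :
    ∃ μ : YoungDiagram,
      (dcol1 μ = d ∧ ∀ ν : YoungDiagram, dcol1 ν = d → μ ≤ ν) ∧
        (μ.card : ℤ) = 2 * d ^ 2 + d := by
  set k := (4 * d + 1).natAbs / 2
  have hk : ((4 * d + 1).natAbs : ℤ) = 2 * k + 1 := by omega
  refine ⟨staircase k, ⟨?_, fun ν hν => staircase_le fun i j hij => ?_⟩, ?_⟩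
  · have := four_mul_dcol1_staircase_add_one k
    rcases neg_one_pow_eq_or ℤ k with h | h <;> rw [h] at this <;> omega
  · have := natAbs_four_mul_dcol1_add_one_le hij
    omega
  · have hcard : (2 * (staircase k).card : ℤ) = k * (k + 1) := by
      exact_mod_cast two_mul_card_staircase k
    have hsq : (2 * k + 1 : ℤ) ^ 2 = (4 * d + 1) ^ 2 := by rw [← hk, Int.natCast_natAbs, sq_abs]
    linarith
end

section
/- The number of partitions λ with d(λ) = d and |λ| - |λ̃| = 2n equals the number of ordered pairs of partitions (μ_1, μ_2) with |μ_1| + |μ_2| = n, where λ̃ denotes the 2-core of λ. -/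
/-!
A partition `λ` with at most `2M` rows is encoded by its β-set `{λᵢ + (2M - 1 - i) | i < 2M}`,
a `2M`-element set of naturals with sum `|λ| + M(2M - 1)`. Halving its even and its odd elements
gives the β-sets of a pair of partitions `(μ₀, μ₁)`, the 2-quotient of `λ`, and this is a
bijection onto pairs with `e` and `o = 2M - e` rows. The parity of `λᵢ + (2M - 1 - i)` records
the colour balance of row `i`, so `e = M + d(λ)`, and comparing sums gives
`|λ| = 2(|μ₀| + |μ₁|) + 2d² - d`. On the other side, removing a domino does not change `d`, and
a 2-core admits no removable domino only if it is a staircase, whose size is `2d² - d`. Hence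
`|λ| - |λ̃| = 2n` exactly when `|μ₀| + |μ₁| = n`.
-/

/-- `d(μ) = N₀(μ) - N₁(μ)` for a Young diagram colored with angle color 0. -/
def dcol0 (μ : YoungDiagram) : ℤ :=
  ((μ.cells.filter fun c => (c.1 + c.2) % 2 = 0).card : ℤ) -
    ((μ.cells.filter fun c => (c.1 + c.2) % 2 = 1).card : ℤ)

/-- Two boxes are adjacent if they are horizontal or vertical neighbours. -/
def CellAdjacent (a b : ℕ × ℕ) : Prop :=
  (a.1 = b.1 ∧ b.2 = a.2 + 1) ∨ (a.2 = b.2 ∧ b.1 = a.1 + 1)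

/-- `ν` is obtained from `μ` by removing one domino keeping a Young diagram shape. -/
def DominoStep (μ ν : YoungDiagram) : Prop :=
  ν ≤ μ ∧ ∃ a b : ℕ × ℕ, CellAdjacent a b ∧ a ∉ ν ∧ b ∉ ν ∧
    μ.cells = insert a (insert b ν.cells)

/-- A Young diagram is a 2-core if no domino can be removed from it. -/
def IsTwoCore (μ : YoungDiagram) : Prop := ∀ ν : YoungDiagram, ¬ DominoStep μ ν

/-- `c` is the 2-core of `lam`. -/
def TwoCoreOf (lam c : YoungDiagram) : Prop :=
  Relation.ReflTransGen DominoStep lam c ∧ IsTwoCore c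

open Finset

namespace YoungDiagram

theorem ext_rowLen {μ ν : YoungDiagram} (h : ∀ i, μ.rowLen i = ν.rowLen i) : μ = ν := by
  ext ⟨i, j⟩
  simp only [mem_cells, mem_iff_lt_rowLen, h]

theorem rowLen_eq_zero_of_colLen_le {μ : YoungDiagram} {i : ℕ} (h : μ.colLen 0 ≤ i) :
    μ.rowLen i = 0 := by
  rwa [← Nat.le_zero, ← not_lt, ← mem_iff_lt_rowLen, mem_iff_lt_colLen, not_lt]

theorem colLen_zero_le_card (μ : YoungDiagram) : μ.colLen 0 ≤ μ.card := by
  rw [colLen_eq_card]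
  exact card_le_card (filter_subset _ _)

theorem sum_cells_eq_sum_rowLen {M : Type*} [AddCommMonoid M] (μ : YoungDiagram) {N : ℕ}
    (h : μ.colLen 0 ≤ N) (f : ℕ × ℕ → M) :
    ∑ c ∈ μ.cells, f c = ∑ i ∈ range N, ∑ j ∈ range (μ.rowLen i), f (i, j) := by
  refine sum_finset_product _ _ _ fun ⟨i, j⟩ => ?_
  simp only [mem_cells, mem_range, ← mem_iff_lt_rowLen, iff_and_self]
  intro hij
  exact (mem_iff_lt_colLen.mp (μ.up_left_mem le_rfl (Nat.zero_le j) hij)).trans_le h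

theorem card_eq_sum_rowLen (μ : YoungDiagram) {N : ℕ} (h : μ.colLen 0 ≤ N) :
    μ.card = ∑ i ∈ range N, μ.rowLen i := by
  rw [YoungDiagram.card, card_eq_sum_ones, μ.sum_cells_eq_sum_rowLen h]
  simp

theorem rowLen_ofRowLens_ofFn {N : ℕ} {r : Fin N → ℕ} (hr : Antitone r) (i : Fin N) :
    (ofRowLens (List.ofFn r) hr.sortedGE_ofFn).rowLen i = r i := by
  simpa using rowLen_ofRowLens (hw := hr.sortedGE_ofFn) ⟨i, by simp⟩

theorem colLen_ofRowLens_le {w : List ℕ} (hw : w.SortedGE) :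
    (ofRowLens w hw).colLen 0 ≤ w.length := by
  rw [← not_lt, ← mem_iff_lt_colLen, mem_ofRowLens]
  simp

def diffUpper (μ : YoungDiagram) (s : Finset (ℕ × ℕ))
    (hs : ∀ a ∈ s, ∀ x ∈ μ, a ≤ x → x ∈ s) : YoungDiagram where
  cells := μ.cells \ s
  isLowerSet := by
    intro x y hyx hx
    simp only [coe_sdiff, Set.mem_sdiff, mem_coe, mem_cells] at hx ⊢
    exact ⟨μ.isLowerSet hyx hx.1, fun hy => hx.2 (hs y hy x hx.1 hyx)⟩

end YoungDiagram

open YoungDiagram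

theorem neg_one_pow_eq_ite_mod_two (k : ℕ) :
    (-1 : ℤ) ^ k = (if k % 2 = 0 then 1 else 0) - (if k % 2 = 1 then 1 else 0) := by
  rcases Nat.mod_two_eq_zero_or_one k with h | h
  · simp [h, (Nat.even_iff.mpr h).neg_one_pow]
  · simp [h, (Nat.odd_iff.mpr h).neg_one_pow]

theorem dcol0_eq_sum (μ : YoungDiagram) : dcol0 μ = ∑ c ∈ μ.cells, (-1 : ℤ) ^ (c.1 + c.2) := by
  simp only [dcol0, card_filter, neg_one_pow_eq_ite_mod_two, sum_sub_distrib]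
  push_cast
  rfl

theorem dcol0_eq_sum_rowLen (μ : YoungDiagram) {N : ℕ} (h : μ.colLen 0 ≤ N) :
    dcol0 μ = ∑ i ∈ range N, (-1 : ℤ) ^ i * (μ.rowLen i % 2 : ℕ) := by
  rw [dcol0_eq_sum, μ.sum_cells_eq_sum_rowLen h]
  refine sum_congr rfl fun i _ => ?_
  simp only [pow_add, ← mul_sum, neg_one_geom_sum, Nat.even_iff]
  split_ifs with h <;> simp [h, Nat.mod_two_ne_zero.mp]

theorem CellAdjacent.ne {a b : ℕ × ℕ} (h : CellAdjacent a b) : a ≠ b := by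
  rintro rfl
  rcases h with ⟨-, h⟩ | ⟨-, h⟩ <;> omega

theorem CellAdjacent.neg_one_pow_add_neg_one_pow {a b : ℕ × ℕ} (h : CellAdjacent a b) :
    (-1 : ℤ) ^ (a.1 + a.2) + (-1) ^ (b.1 + b.2) = 0 := by
  have hab : b.1 + b.2 = a.1 + a.2 + 1 := by rcases h with ⟨h1, h2⟩ | ⟨h1, h2⟩ <;> omega
  rw [hab, pow_succ]
  ring

theorem DominoStep.cells_eq {μ ν : YoungDiagram} (h : DominoStep μ ν) :
    ∃ a b, CellAdjacent a b ∧ a ∉ insert b ν.cells ∧ b ∉ ν.cells ∧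
      μ.cells = insert a (insert b ν.cells) := by
  obtain ⟨-, a, b, hab, ha, hb, hμ⟩ := h
  refine ⟨a, b, hab, ?_, hb, hμ⟩
  simp [hab.ne, ha]

theorem DominoStep.card_eq {μ ν : YoungDiagram} (h : DominoStep μ ν) : μ.card = ν.card + 2 := by
  obtain ⟨a, b, -, ha, hb, hμ⟩ := h.cells_eq
  rw [YoungDiagram.card, hμ, card_insert_of_notMem ha, card_insert_of_notMem hb]

theorem DominoStep.dcol0_eq {μ ν : YoungDiagram} (h : DominoStep μ ν) : dcol0 μ = dcol0 ν := by
  obtain ⟨a, b, hab, ha, hb, hμ⟩ := h.cells_eq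
  rw [dcol0_eq_sum, dcol0_eq_sum, hμ, sum_insert ha, sum_insert hb, ← add_assoc,
    hab.neg_one_pow_add_neg_one_pow, zero_add]

theorem Relation.ReflTransGen.dcol0_eq {μ ν : YoungDiagram}
    (h : Relation.ReflTransGen DominoStep μ ν) : dcol0 μ = dcol0 ν := by
  induction h with
  | refl => rfl
  | tail _ hstep ih => exact ih.trans hstep.dcol0_eq

theorem exists_twoCoreOf (lam : YoungDiagram) : ∃ c, TwoCoreOf lam c := by
  induction hk : lam.card using Nat.strong_induction_on generalizing lam with
  | _ k ih =>
    by_cases hcore : IsTwoCore lam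
    · exact ⟨lam, .refl, hcore⟩
    · obtain ⟨ν, hstep⟩ := not_forall_not.mp hcore
      obtain ⟨c, hνc, hc⟩ := ih ν.card (by rw [← hk, hstep.card_eq]; omega) ν rfl
      exact ⟨c, .head hstep hνc, hc⟩

theorem not_isTwoCore_of_removable_domino {μ : YoungDiagram} {a b : ℕ × ℕ}
    (hab : CellAdjacent a b) (ha : a ∈ μ) (hb : b ∈ μ)
    (hup : ∀ x ∈ μ, a ≤ x ∨ b ≤ x → x = a ∨ x = b) : ¬ IsTwoCore μ := by
  have hs : ∀ y ∈ ({a, b} : Finset (ℕ × ℕ)), ∀ x ∈ μ, y ≤ x → x ∈ ({a, b} : Finset _) := by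
    simp only [mem_insert, mem_singleton]
    rintro y (rfl | rfl) x hx hyx
    exacts [hup x hx (.inl hyx), hup x hx (.inr hyx)]
  refine fun hcore => hcore (μ.diffUpper {a, b} hs) ⟨?_, a, b, hab, ?_, ?_, ?_⟩
  · exact cells_subset_iff.mp sdiff_subset
  · simp [← mem_cells, diffUpper]
  · simp [← mem_cells, diffUpper]
  · ext x
    simp only [diffUpper, mem_insert, mem_sdiff, mem_singleton,
      mem_cells]
    constructor
    · tauto
    · rintro (rfl | rfl | ⟨hx, -⟩) <;> assumption

theorem not_isTwoCore_of_rowLen_succ_add_two_le {μ : YoungDiagram} {i : ℕ}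
    (h : μ.rowLen (i + 1) + 2 ≤ μ.rowLen i) : ¬ IsTwoCore μ := by
  refine not_isTwoCore_of_removable_domino (a := (i, μ.rowLen i - 2))
    (b := (i, μ.rowLen i - 1)) (.inl ⟨rfl, by omega⟩) (mem_iff_lt_rowLen.mpr (by omega))
    (mem_iff_lt_rowLen.mpr (by omega)) ?_
  rintro ⟨x, y⟩ hxy hle
  rw [mem_iff_lt_rowLen] at hxy
  simp only [Prod.mk_le_mk, Prod.mk.injEq] at hle ⊢
  have hx : x ≤ i := by
    by_contra! hx
    have := μ.rowLen_anti (i + 1) x hx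
    omega
  obtain rfl : x = i := by omega
  omega

theorem not_isTwoCore_of_rowLen_succ_eq {μ : YoungDiagram} {i : ℕ}
    (heq : μ.rowLen (i + 1) = μ.rowLen i) (hpos : 0 < μ.rowLen i)
    (hlt : μ.rowLen (i + 2) < μ.rowLen i) : ¬ IsTwoCore μ := by
  refine not_isTwoCore_of_removable_domino (a := (i, μ.rowLen i - 1))
    (b := (i + 1, μ.rowLen i - 1)) (.inr ⟨rfl, rfl⟩) (mem_iff_lt_rowLen.mpr (by omega))
    (mem_iff_lt_rowLen.mpr (by omega)) ?_
  rintro ⟨x, y⟩ hxy hle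
  rw [mem_iff_lt_rowLen] at hxy
  simp only [Prod.mk_le_mk, Prod.mk.injEq] at hle ⊢
  have hx : x ≤ i + 1 := by
    by_contra! hx
    have := μ.rowLen_anti (i + 2) x hx
    omega
  have := μ.rowLen_anti i x (by omega)
  omega

theorem sum_neg_one_pow_mul_sub_mod_two_add_two (k : ℕ) :
    ∑ i ∈ range (k + 2), (-1 : ℤ) ^ i * ((k + 2 - i) % 2 : ℕ) =
      ∑ i ∈ range k, (-1 : ℤ) ^ i * ((k - i) % 2 : ℕ) + (-1) ^ (k + 1) := by
  have hshift : ∀ i ∈ range k, (k + 2 - i) % 2 = (k - i) % 2 := fun i hi => by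
    rw [mem_range] at hi; omega
  rw [sum_range_succ, sum_range_succ, sum_congr rfl fun i hi => by rw [hshift i hi],
    show (k + 2 - k) % 2 = 0 by omega, show (k + 2 - (k + 1)) % 2 = 1 by omega]
  simp

theorem sum_neg_one_pow_mul_sub_mod_two (m : ℕ) :
    ∑ i ∈ range (2 * m), (-1 : ℤ) ^ i * ((2 * m - i) % 2 : ℕ) = -m ∧
      ∑ i ∈ range (2 * m + 1), (-1 : ℤ) ^ i * ((2 * m + 1 - i) % 2 : ℕ) = m + 1 := by
  induction m with
  | zero => simp
  | succ m ih =>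
    rw [show 2 * (m + 1) = 2 * m + 2 by ring, show 2 * m + 2 + 1 = 2 * m + 1 + 2 by ring,
      sum_neg_one_pow_mul_sub_mod_two_add_two, sum_neg_one_pow_mul_sub_mod_two_add_two,
      ih.1, ih.2,
      (Nat.odd_iff.mpr (by omega : (2 * m + 1) % 2 = 1)).neg_one_pow,
      (Nat.even_iff.mpr (by omega : (2 * m + 1 + 1) % 2 = 0)).neg_one_pow]
    push_cast
    constructor <;> ring

namespace IsTwoCore

variable {c : YoungDiagram}

theorem rowLen_succ_lt (hc : IsTwoCore c) {i : ℕ} (hi : 0 < c.rowLen i) :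
    c.rowLen (i + 1) < c.rowLen i := by
  induction hk : c.colLen 0 - i generalizing i with
  | zero =>
    rw [rowLen_eq_zero_of_colLen_le (Nat.sub_eq_zero_iff_le.mp hk)] at hi
    exact absurd hi (lt_irrefl 0)
  | succ k ih =>
    -- equal rows `i`, `i + 1` followed by a shorter row `i + 2` end in a vertical domino
    by_contra! hle
    have heq : c.rowLen (i + 1) = c.rowLen i := le_antisymm (c.rowLen_anti _ _ i.le_succ) hle
    exact not_isTwoCore_of_rowLen_succ_eq heq hi (heq ▸ ih (heq ▸ hi) (by omega)) hc

theorem rowLen_eq_rowLen_succ_add_one (hc : IsTwoCore c) {i : ℕ} (hi : 0 < c.rowLen i) :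
    c.rowLen i = c.rowLen (i + 1) + 1 := by
  have := hc.rowLen_succ_lt hi
  have : ¬ c.rowLen (i + 1) + 2 ≤ c.rowLen i := fun h =>
    not_isTwoCore_of_rowLen_succ_add_two_le h hc
  omega

theorem rowLen_eq (hc : IsTwoCore c) (i : ℕ) : c.rowLen i = c.colLen 0 - i := by
  induction hk : c.colLen 0 - i generalizing i with
  | zero => exact rowLen_eq_zero_of_colLen_le (Nat.sub_eq_zero_iff_le.mp hk)
  | succ k ih =>
    have hi : 0 < c.rowLen i := by
      rw [← mem_iff_lt_rowLen, mem_iff_lt_colLen]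
      omega
    rw [hc.rowLen_eq_rowLen_succ_add_one hi, ih (i + 1) (by omega)]

theorem two_mul_card (hc : IsTwoCore c) :
    2 * c.card = c.colLen 0 * (c.colLen 0 + 1) := by
  have hreflect : ∑ i ∈ range (c.colLen 0), (c.colLen 0 - i) =
      ∑ i ∈ range (c.colLen 0 + 1), i := by
    rw [sum_range_succ', add_zero, ← sum_range_reflect]
    exact sum_congr rfl fun i hi => by rw [mem_range] at hi; omega
  rw [c.card_eq_sum_rowLen le_rfl, sum_congr rfl fun i _ => hc.rowLen_eq i, hreflect, mul_comm,
    sum_range_id_mul_two, Nat.add_sub_cancel, mul_comm]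

theorem dcol0_eq (hc : IsTwoCore c) :
    dcol0 c = ∑ i ∈ range (c.colLen 0), (-1 : ℤ) ^ i * ((c.colLen 0 - i) % 2 : ℕ) := by
  rw [dcol0_eq_sum_rowLen c le_rfl]
  simp only [hc.rowLen_eq]

theorem card_eq (hc : IsTwoCore c) : (c.card : ℤ) = 2 * dcol0 c ^ 2 - dcol0 c := by
  have hcard : 2 * (c.card : ℤ) = c.colLen 0 * (c.colLen 0 + 1) := by
    exact_mod_cast hc.two_mul_card
  rw [hc.dcol0_eq]
  obtain ⟨m, hm | hm⟩ := Nat.even_or_odd' (c.colLen 0) <;> rw [hm] at hcard ⊢ <;>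
    push_cast at hcard
  · rw [(sum_neg_one_pow_mul_sub_mod_two m).1]
    linarith
  · rw [(sum_neg_one_pow_mul_sub_mod_two m).2]
    linarith

end IsTwoCore

theorem TwoCoreOf.card_eq {lam c : YoungDiagram} (h : TwoCoreOf lam c) :
    (c.card : ℤ) = 2 * dcol0 lam ^ 2 - dcol0 lam := by
  rw [h.1.dcol0_eq]
  exact h.2.card_eq

theorem exists_twoCoreOf_card_eq_iff (lam : YoungDiagram) (n : ℕ) :
    (∃ c, TwoCoreOf lam c ∧ lam.card = c.card + 2 * n) ↔
      (lam.card : ℤ) = 2 * dcol0 lam ^ 2 - dcol0 lam + 2 * n := by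
  constructor
  · rintro ⟨c, hc, hcard⟩
    rw [hcard, Nat.cast_add, hc.card_eq]
    push_cast
    ring
  · intro hcard
    obtain ⟨c, hc⟩ := exists_twoCoreOf lam
    refine ⟨c, hc, ?_⟩
    have := hc.card_eq
    omega

theorem Fin.add_sub_le_of_strictMono {m : ℕ} {x : Fin m → ℕ} (hx : StrictMono x) {i j : Fin m}
    (hij : i ≤ j) : x i + (j - i) ≤ x j := by
  obtain ⟨t, ht⟩ := Nat.exists_eq_add_of_le (Fin.le_def.mp hij)
  induction t generalizing j with
  | zero =>
    obtain rfl : j = i := Fin.ext ht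
    simp
  | succ t ih =>
    have hlt : (⟨i + t, by omega⟩ : Fin m) < j := Fin.lt_def.mpr (by simp; omega)
    have h1 : x i + t ≤ x ⟨i + t, by omega⟩ := by
      simpa using ih (j := ⟨i + t, by omega⟩) (Fin.le_def.mpr (by simp)) rfl
    have := hx hlt
    omega

def betaSet (m : ℕ) (μ : YoungDiagram) : Finset ℕ :=
  (range m).image fun i => μ.rowLen i + (m - 1 - i)

theorem betaSet_injOn (μ : YoungDiagram) (m : ℕ) :
    Set.InjOn (fun i => μ.rowLen i + (m - 1 - i)) (range m) := by
  intro i hi j hj hij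
  simp only [coe_range, Set.mem_Iio] at hi hj hij
  have := μ.rowLen_anti (min i j) (max i j) (min_le_max)
  rcases le_total i j with h | h <;> simp [h] at this <;> omega

theorem card_betaSet (μ : YoungDiagram) (m : ℕ) : (betaSet m μ).card = m := by
  rw [betaSet, card_image_of_injOn (betaSet_injOn μ m), card_range]

section BetaSet

variable {m : ℕ} {μ : YoungDiagram}

theorem two_mul_sum_betaSet_add (h : μ.colLen 0 ≤ m) :
    2 * ∑ x ∈ betaSet m μ, x + m = 2 * μ.card + m * m := by
  rw [betaSet, sum_image (betaSet_injOn μ m), sum_add_distrib, ← μ.card_eq_sum_rowLen h,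
    sum_range_reflect (fun i => i) m, mul_add, mul_comm 2 (∑ i ∈ range m, i),
    sum_range_id_mul_two, Nat.mul_sub_one, add_assoc, Nat.sub_add_cancel (Nat.le_mul_self m)]

theorem antitone_orderEmbOfFin_rev_sub (S : Finset ℕ) (hS : S.card = m) :
    Antitone fun i : Fin m => S.orderEmbOfFin hS i.rev - i.rev := fun i j hij => by
  have := Fin.add_sub_le_of_strictMono (S.orderEmbOfFin hS).strictMono (Fin.rev_anti hij)
  dsimp only
  omega

/-- Its `i`-th row is `sᵢ - (m - 1 - i)`, where `s₀ > s₁ > ⋯` enumerates `S`. -/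
def ofBetaSet (S : Finset ℕ) (hS : S.card = m) : YoungDiagram :=
  YoungDiagram.ofRowLens _ (antitone_orderEmbOfFin_rev_sub S hS).sortedGE_ofFn

theorem rowLen_ofBetaSet {S : Finset ℕ} (hS : S.card = m) (i : Fin m) :
    (ofBetaSet S hS).rowLen i = S.orderEmbOfFin hS i.rev - i.rev :=
  rowLen_ofRowLens_ofFn (antitone_orderEmbOfFin_rev_sub S hS) i

theorem colLen_ofBetaSet_le {S : Finset ℕ} (hS : S.card = m) : (ofBetaSet S hS).colLen 0 ≤ m :=
  (colLen_ofRowLens_le _).trans_eq (List.length_ofFn)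

theorem betaSet_ofBetaSet {S : Finset ℕ} (hS : S.card = m) : betaSet m (ofBetaSet S hS) = S := by
  refine eq_of_subset_of_card_le (fun x hx => ?_) (by rw [hS, card_betaSet])
  obtain ⟨i, hi, rfl⟩ := mem_image.mp hx
  rw [mem_range] at hi
  have hle := Fin.add_sub_le_of_strictMono (S.orderEmbOfFin hS).strictMono
    (Fin.le_def.mpr (Nat.zero_le _) : (⟨0, by omega⟩ : Fin m) ≤ Fin.rev ⟨i, hi⟩)
  have hrow := rowLen_ofBetaSet hS ⟨i, hi⟩
  simp only [Fin.val_rev] at hle hrow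
  convert S.orderEmbOfFin_mem hS (Fin.rev ⟨i, hi⟩) using 1
  omega

theorem orderEmbOfFin_betaSet (j : Fin m) :
    (betaSet m μ).orderEmbOfFin (card_betaSet μ m) j = μ.rowLen j.rev + j := by
  refine (congrFun (orderEmbOfFin_unique (card_betaSet μ m)
    (f := fun j : Fin m => μ.rowLen j.rev + j) (fun j => ?_) fun a b hab => ?_) j).symm
  · refine mem_image.mpr ⟨j.rev, mem_range.mpr j.rev.2, ?_⟩
    simp only [Fin.val_rev]
    omega
  · have := μ.rowLen_anti _ _ (Fin.rev_anti hab.le)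
    simp only [Fin.lt_def] at hab ⊢
    omega

theorem ofBetaSet_betaSet (h : μ.colLen 0 ≤ m) :
    ofBetaSet (betaSet m μ) (card_betaSet μ m) = μ := by
  refine ext_rowLen fun i => ?_
  by_cases hi : i < m
  · rw [show i = (⟨i, hi⟩ : Fin m) from rfl, rowLen_ofBetaSet, orderEmbOfFin_betaSet,
      Fin.rev_rev]
    simp
  · rw [rowLen_eq_zero_of_colLen_le ((colLen_ofBetaSet_le _).trans (by omega)),
      rowLen_eq_zero_of_colLen_le (h.trans (by omega))]

def betaSetEquiv (m : ℕ) : {μ : YoungDiagram // μ.colLen 0 ≤ m} ≃ {S : Finset ℕ // S.card = m}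
    where
  toFun μ := ⟨betaSet m μ, card_betaSet μ m⟩
  invFun S := ⟨ofBetaSet S.1 S.2, colLen_ofBetaSet_le S.2⟩
  left_inv μ := Subtype.ext (ofBetaSet_betaSet μ.2)
  right_inv S := Subtype.ext (betaSet_ofBetaSet S.2)

end BetaSet

/-- `S ↦ ({a | 2a ∈ S}, {b | 2b + 1 ∈ S})`. -/
def parityEquiv : Finset ℕ ≃ Finset ℕ × Finset ℕ :=
  Equiv.natSumNatEquivNat.symm.finsetCongr.trans Finset.sumEquiv.toEquiv

theorem parityEquiv_symm_apply (p : Finset ℕ × Finset ℕ) :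
    parityEquiv.symm p = (p.1.disjSum p.2).map Equiv.natSumNatEquivNat.toEmbedding :=
  rfl

theorem card_parityEquiv_symm (p : Finset ℕ × Finset ℕ) :
    (parityEquiv.symm p).card = p.1.card + p.2.card := by
  rw [parityEquiv_symm_apply, card_map, card_disjSum]

theorem card_filter_even_parityEquiv_symm (p : Finset ℕ × Finset ℕ) :
    ((parityEquiv.symm p).filter Even).card = p.1.card := by
  rw [parityEquiv_symm_apply, filter_map, card_map, card_filter, sum_disjSum]
  simp

theorem sum_parityEquiv_symm (p : Finset ℕ × Finset ℕ) :
    ∑ x ∈ parityEquiv.symm p, x = 2 * ∑ a ∈ p.1, a + 2 * ∑ b ∈ p.2, b + p.2.card := by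
  rw [parityEquiv_symm_apply, sum_map, sum_disjSum]
  simp [mul_sum, sum_add_distrib, add_assoc]

theorem two_mul_ite_even_add_sub (M i r : ℕ) (hi : i < 2 * M) :
    2 * (if Even (r + (2 * M - 1 - i)) then 1 else 0 : ℤ) =
      1 - (-1) ^ i + 2 * (-1) ^ i * (r % 2 : ℕ) := by
  simp only [neg_one_pow_eq_ite_mod_two, Nat.even_iff]
  split_ifs <;> omega

theorem card_filter_even_betaSet {M : ℕ} {μ : YoungDiagram} (h : μ.colLen 0 ≤ 2 * M) :
    (((betaSet (2 * M) μ).filter Even).card : ℤ) = dcol0 μ + M := by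
  have hcard : ((betaSet (2 * M) μ).filter Even).card =
      ∑ i ∈ range (2 * M), if Even (μ.rowLen i + (2 * M - 1 - i)) then 1 else 0 := by
    rw [betaSet, filter_image,
      card_image_of_injOn ((betaSet_injOn μ _).mono (coe_subset.mpr (filter_subset _ _))),
      card_filter]
  have htwice : 2 * (((betaSet (2 * M) μ).filter Even).card : ℤ) = 2 * (dcol0 μ + M) := by
    rw [hcard, Nat.cast_sum, mul_sum, dcol0_eq_sum_rowLen μ h]
    rw [sum_congr rfl fun i hi => by
      push_cast
      exact two_mul_ite_even_add_sub M i (μ.rowLen i) (mem_range.mp hi)]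
    simp only [sum_add_distrib, sum_sub_distrib, neg_one_geom_sum, mul_assoc, ← mul_sum]
    rw [sum_const, card_range, if_pos (even_two_mul M)]
    push_cast
    ring
  linarith

def twoQuotientEquiv (e o : ℕ) :
    {lam : YoungDiagram // lam.colLen 0 ≤ e + o ∧ ((betaSet (e + o) lam).filter Even).card = e} ≃
      {μ : YoungDiagram // μ.colLen 0 ≤ e} × {ν : YoungDiagram // ν.colLen 0 ≤ o} :=
  calc
    _ ≃ {S : {S : Finset ℕ // S.card = e + o} // (S.1.filter Even).card = e} :=
      (Equiv.subtypeSubtypeEquivSubtypeInter (fun lam : YoungDiagram => lam.colLen 0 ≤ e + o)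
        (fun lam => ((betaSet (e + o) lam).filter Even).card = e)).symm.trans
        ((betaSetEquiv (e + o)).subtypeEquiv fun _ => Iff.rfl)
    _ ≃ {S : Finset ℕ // S.card = e + o ∧ (S.filter Even).card = e} :=
      Equiv.subtypeSubtypeEquivSubtypeInter (fun S : Finset ℕ => S.card = e + o)
        (fun S => (S.filter Even).card = e)
    _ ≃ {p : Finset ℕ × Finset ℕ // p.1.card = e ∧ p.2.card = o} :=
      parityEquiv.subtypeEquiv fun S => by
        rw [← parityEquiv.symm_apply_apply S, card_parityEquiv_symm,
          card_filter_even_parityEquiv_symm, Equiv.apply_symm_apply]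
        omega
    _ ≃ {A : Finset ℕ // A.card = e} × {B : Finset ℕ // B.card = o} :=
      Equiv.subtypeProdEquivProd (p := fun A : Finset ℕ => A.card = e)
        (q := fun B : Finset ℕ => B.card = o)
    _ ≃ _ := (betaSetEquiv e).symm.prodCongr (betaSetEquiv o).symm

theorem two_mul_card_twoQuotientEquiv {e o : ℕ}
    (lam : {lam : YoungDiagram // lam.colLen 0 ≤ e + o ∧
      ((betaSet (e + o) lam).filter Even).card = e}) :
    2 * (lam.1.card : ℤ) = 4 * ((twoQuotientEquiv e o lam).1.1.card +
      (twoQuotientEquiv e o lam).2.1.card) + ((e : ℤ) - o) ^ 2 - ((e : ℤ) - o) := by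
  set q := twoQuotientEquiv e o lam
  set p := parityEquiv (betaSet (e + o) lam)
  have hA : betaSet e q.1 = p.1 := betaSet_ofBetaSet (S := p.1) _
  have hB : betaSet o q.2 = p.2 := betaSet_ofBetaSet (S := p.2) _
  have hS := two_mul_sum_betaSet_add lam.2.1
  have hSA := two_mul_sum_betaSet_add q.1.2
  have hSB := two_mul_sum_betaSet_add q.2.2
  have hsplit := sum_parityEquiv_symm p
  rw [parityEquiv.symm_apply_apply] at hsplit
  rw [hA] at hSA
  rw [hB] at hSB
  have hcardB : p.2.card = o := by rw [← hB, card_betaSet]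
  rw [hcardB] at hsplit
  zify at hS hSA hSB hsplit
  linear_combination (-1 : ℤ) * hS + 2 * hsplit + 2 * hSA + 2 * hSB

def twoQuotientCardEquiv {e o n : ℕ} (he : n ≤ e) (ho : n ≤ o) :
    {lam : YoungDiagram // (lam.colLen 0 ≤ e + o ∧ ((betaSet (e + o) lam).filter Even).card = e) ∧
        2 * (lam.card : ℤ) = 4 * n + ((e : ℤ) - o) ^ 2 - ((e : ℤ) - o)} ≃
      {p : YoungDiagram × YoungDiagram // p.1.card + p.2.card = n} :=
  calc
    _ ≃ {lam : {lam : YoungDiagram // lam.colLen 0 ≤ e + o ∧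
          ((betaSet (e + o) lam).filter Even).card = e} //
          2 * (lam.1.card : ℤ) = 4 * n + ((e : ℤ) - o) ^ 2 - ((e : ℤ) - o)} :=
      (Equiv.subtypeSubtypeEquivSubtypeInter _ _).symm
    _ ≃ {q : {μ : YoungDiagram // μ.colLen 0 ≤ e} × {ν : YoungDiagram // ν.colLen 0 ≤ o} //
          q.1.1.card + q.2.1.card = n} :=
      (twoQuotientEquiv e o).subtypeEquiv fun lam => by
        rw [two_mul_card_twoQuotientEquiv]
        omega
    _ ≃ {q : {p : YoungDiagram × YoungDiagram // p.1.colLen 0 ≤ e ∧ p.2.colLen 0 ≤ o} //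
          q.1.1.card + q.1.2.card = n} :=
      Equiv.subtypeProdEquivProd.symm.subtypeEquiv fun _ => Iff.rfl
    _ ≃ _ := Equiv.subtypeSubtypeEquivSubtype
      (p := fun p : YoungDiagram × YoungDiagram => p.1.colLen 0 ≤ e ∧ p.2.colLen 0 ≤ o)
      (q := fun p => p.1.card + p.2.card = n) fun {p} hp =>
      ⟨p.1.colLen_zero_le_card.trans (by omega), p.2.colLen_zero_le_card.trans (by omega)⟩

theorem dcol0_eq_and_exists_twoCoreOf_iff {d : ℤ} {n M e o : ℕ} (he : (e : ℤ) = M + d)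
    (ho : (o : ℤ) = M - d) (hM : 2 * d ^ 2 - d + 2 * n ≤ 2 * M) (lam : YoungDiagram) :
    (dcol0 lam = d ∧ ∃ c : YoungDiagram, TwoCoreOf lam c ∧ lam.card = c.card + 2 * n) ↔
      (lam.colLen 0 ≤ e + o ∧ ((betaSet (e + o) lam).filter Even).card = e) ∧
        2 * (lam.card : ℤ) = 4 * n + ((e : ℤ) - o) ^ 2 - ((e : ℤ) - o) := by
  rw [exists_twoCoreOf_card_eq_iff, show e + o = 2 * M by omega]
  constructor
  · rintro ⟨rfl, hcard⟩
    have hcol : lam.colLen 0 ≤ 2 * M := lam.colLen_zero_le_card.trans (by zify; linarith)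
    have := card_filter_even_betaSet hcol
    exact ⟨⟨hcol, by omega⟩, by rw [he, ho]; linear_combination 2 * hcard⟩
  · rintro ⟨⟨hcol, heven⟩, hcard⟩
    have := card_filter_even_betaSet hcol
    obtain rfl : dcol0 lam = d := by omega
    exact ⟨rfl, by rw [he, ho] at hcard; linarith⟩

/-- The number of partitions `λ` with `d(λ) = d` and `|λ| - |λ̃| = 2n` (where `λ̃` is
the 2-core of `λ`) equals the number of ordered pairs of partitions `(μ₁, μ₂)` with
`|μ₁| + |μ₂| = n`, stated as the existence of a bijection. -/
theorem card_partitions_with_core_eq_card_pairs (d : ℤ) (n : ℕ) :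
    Nonempty
      ({lam : YoungDiagram //
          dcol0 lam = d ∧ ∃ c : YoungDiagram, TwoCoreOf lam c ∧ lam.card = c.card + 2 * n} ≃
        {p : YoungDiagram × YoungDiagram // p.1.card + p.2.card = n}) := by
  -- large enough that `λ` has at most `2M` rows and `μ₀`, `μ₁` at most `e`, `o` rows
  obtain ⟨M, hM⟩ : ∃ M : ℕ, (M : ℤ) = n + d ^ 2 + |d| :=
    ⟨n + d.natAbs ^ 2 + d.natAbs, by push_cast [Int.natCast_natAbs, sq_abs]; rfl⟩
  have hd := abs_le.mp (le_refl |d|)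
  obtain ⟨e, he⟩ : ∃ e : ℕ, (e : ℤ) = M + d := ⟨(M + d).toNat, Int.toNat_of_nonneg (by nlinarith)⟩
  obtain ⟨o, ho⟩ : ∃ o : ℕ, (o : ℤ) = M - d := ⟨(M - d).toNat, Int.toNat_of_nonneg (by nlinarith)⟩
  have hne : n ≤ e := by zify; nlinarith
  have hno : n ≤ o := by zify; nlinarith
  have hcore := dcol0_eq_and_exists_twoCoreOf_iff he ho (n := n) (by linarith)
  exact ⟨(Equiv.subtypeEquivRight hcore).trans (twoQuotientCardEquiv hne hno)⟩
end
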